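/- Define ω ∈ S_{m+n} by ω(i) = m+1-i for i ∈ {1,...,m} and ω(i) = 2m+n+1-i for i ∈ {m+1,...,m+n}. Let C be an m×n Cauchon diagram with associated permutation v, let k ∈ {n+1,...,m+n-1}, and let (x_1,y_1),...,(x_t,y_t) be the chain rooted at box k on the south-east border. Then ({1,...,m} \ {m+1-x_i : 1 ≤ i ≤ t}) ∪ {2m+n+1-y_i : 1 ≤ i ≤ t} = ({1,...,m+n} \ (ω∘v)({1,...,k})) ∪ {m+n-k+1,...,m}, where (ω∘v)({1,...,k}) denotes the image of {1,...,k} under the composite ω∘v. -/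

import Mathlib

/-- The transposition `s_{a+b-m-1} = (a+b-m-1, a+b-m)` assigned to the grid square `(a,b)`. -/
def sqPerm (m : ℕ) (p : ℕ × ℕ) : Equiv.Perm ℕ :=
  Equiv.swap (p.1 + p.2 - m - 1) (p.1 + p.2 - m)

/-- The reading word of the set of grid squares satisfying `P`: rows are read from the
top (`a = m`) down to the bottom (`a = 1`), and within each row columns are read from the
left (`b = m+1`) to the right (`b = m+n`); factors are multiplied so that the last factor
in reading order is applied first. -/
def readingWord (m n : ℕ) (P : ℕ × ℕ → Bool) : Equiv.Perm ℕ :=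
  ((List.range m).map fun i =>
    (((List.range n).map fun j =>
      if P (m - i, m + 1 + j) then sqPerm m (m - i, m + 1 + j) else 1)).prod).prod

/-- `(a,b)` is a square of the `m × n` grid: `1 ≤ a ≤ m`, `m+1 ≤ b ≤ m+n`. -/
def InGrid (m n : ℕ) (p : ℕ × ℕ) : Prop :=
  1 ≤ p.1 ∧ p.1 ≤ m ∧ m + 1 ≤ p.2 ∧ p.2 ≤ m + n

/-- A colouring (`true` = black, `false` = white) is a Cauchon diagram if for every black
square `(a,b)`, either every square `(a,b')` with `b' < b` is black, or every square
`(a',b)` with `a' > a` is black. -/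
def IsCauchon (m n : ℕ) (col : ℕ × ℕ → Bool) : Prop :=
  ∀ a b, InGrid m n (a, b) → col (a, b) = true →
    (∀ b', m + 1 ≤ b' → b' < b → col (a, b') = true) ∨
    (∀ a', a < a' → a' ≤ m → col (a', b) = true)

/-- The permutation associated to a colouring: the reading word of its set of black squares. -/
def assocPerm (m n : ℕ) (col : ℕ × ℕ → Bool) : Equiv.Perm ℕ :=
  readingWord m n col

/-- `v_{x,y}`: the reading word of the black squares `(a,b)` with `a ≥ x` and `b ≤ y`. -/
def vAt (m n : ℕ) (col : ℕ × ℕ → Bool) (x y : ℕ) : Equiv.Perm ℕ :=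
  readingWord m n fun p => col p && decide (x ≤ p.1) && decide (p.2 ≤ y)

/-- `w_{x,y}`: the reading word of all grid squares `(a,b)` with `a ≥ x` and `b ≤ y`. -/
def wAt (m n x y : ℕ) : Equiv.Perm ℕ :=
  readingWord m n fun p => decide (x ≤ p.1) && decide (p.2 ≤ y)

/-- Box `k` on the south-east border: `(1, m+k)` if `k ≤ n`, and `(k-n+1, m+n)` otherwise. -/
def boxSE (m n k : ℕ) : ℕ × ℕ :=
  if k ≤ n then (1, m + k) else (k - n + 1, m + n)

/-- `(X 1, Y 1), ..., (X t, Y t)` is the chain rooted at the square `(x,y)` of the colouring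
`col` (with `t = 0` for the empty chain). -/
def IsChainRootedAt (m n : ℕ) (col : ℕ × ℕ → Bool) (x y : ℕ)
    (t : ℕ) (X Y : ℕ → ℕ) : Prop :=
  -- every member of the chain is a white square of the grid
  (∀ i, 1 ≤ i → i ≤ t → InGrid m n (X i, Y i) ∧ col (X i, Y i) = false) ∧
  -- if `(x,y)` is white, the chain starts at `(x,y)`
  (col (x, y) = false → 1 ≤ t ∧ X 1 = x ∧ Y 1 = y) ∧
  -- if `(x,y)` is black and the chain is nonempty, it starts at the white square
  -- weakly north-west of `(x,y)` nearest to it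
  (col (x, y) = true → 1 ≤ t →
    x ≤ X 1 ∧ Y 1 ≤ y ∧
      ∀ a b, InGrid m n (a, b) → col (a, b) = false → x ≤ a → b ≤ y →
        X 1 ≤ a ∧ b ≤ Y 1) ∧
  -- the chain is empty only when there is no white square weakly north-west of `(x,y)`
  (t = 0 → ∀ a b, InGrid m n (a, b) → col (a, b) = false → x ≤ a → b ≤ y → False) ∧
  -- inductive step: each next member is the nearest white square strictly north-west
  (∀ i, 1 ≤ i → i < t →
    X i < X (i + 1) ∧ Y (i + 1) < Y i ∧
      ∀ a b, InGrid m n (a, b) → col (a, b) = false → X i < a → b < Y i →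
        X (i + 1) ≤ a ∧ b ≤ Y (i + 1)) ∧
  -- termination: no white square strictly north-west of the last member
  (1 ≤ t → ∀ a b, InGrid m n (a, b) → col (a, b) = false → X t < a → b < Y t → False)

/-!
Write `v_{x,y}` for `vAt m n col x y`. Box `k` is `(x, m+n)` with `x = k-n+1`. The rows below `x`
only permute `{1,...,k}` and `v_{x,m+n}` fixes `{1,...,x-1}`, so
`v({1,...,k}) = {1,...,x-1} ∪ v_{x,m+n}({x,...,k})`. By induction on the size of the region
north-west of `(x, m+1+c)`, `v_{x,m+1+c}` maps `{x,...,x+c}` onto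
`{X_i} ∪ ({m+1,...,m+1+c} \ {Y_i})` for the chain rooted at `(x, m+1+c)`. By the Cauchon
condition the corner is white, or black with a black row to its left, or black with a black column
above it. A white corner is the first member of the chain and contributes `x` to the image, the
rest of the chain being rooted at `(x+1, m+c)`; a black row shifts `{x,...,x+c}` up by one and lets the root
move one row up; a black column sends `x+c` to `m+1+c` and lets the root move one column left.
Applying `ω` and taking complements gives the identity.
-/

open Finset

theorem Equiv.Perm.list_prod_mapsTo {α : Type*} {l : List (Equiv.Perm α)} {s : Set α}
    (h : ∀ σ ∈ l, Set.MapsTo σ s s) : Set.MapsTo l.prod s s := by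
  induction l with
  | nil => exact Set.mapsTo_id s
  | cons σ l ih =>
    rw [List.prod_cons, Equiv.Perm.coe_mul]
    exact (h σ List.mem_cons_self).comp (ih fun τ hτ => h τ (List.mem_cons_of_mem _ hτ))

theorem Equiv.swap_mapsTo {α : Type*} [DecidableEq α] {a b : α} {s : Set α}
    (h : a ∈ s ↔ b ∈ s) : Set.MapsTo (Equiv.swap a b) s s := by
  intro z hz
  rcases eq_or_ne z a with rfl | hza
  · rw [Equiv.swap_apply_left]; exact h.1 hz
  rcases eq_or_ne z b with rfl | hzb
  · rw [Equiv.swap_apply_right]; exact h.2 hz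
  · rwa [Equiv.swap_apply_of_ne_of_ne hza hzb]

theorem Finset.image_perm_eq_self {α : Type*} [DecidableEq α] {s : Finset α}
    {σ : Equiv.Perm α} (h : Set.MapsTo σ s s) : s.image σ = s :=
  eq_of_subset_of_card_le (image_subset_iff.2 h) (card_image_of_injective s σ.injective).ge

theorem List.prod_map_range_eq_of_eq_one {M : Type*} [Monoid M] (f : ℕ → M) {r s : ℕ}
    (hrs : r ≤ s) (h : ∀ i, r ≤ i → i < s → f i = 1) :
    ((List.range s).map f).prod = ((List.range r).map f).prod := by
  obtain ⟨d, rfl⟩ := Nat.exists_eq_add_of_le hrs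
  have hones : ((List.range d).map (f ∘ (r + ·))).prod = 1 := by
    refine List.prod_eq_one fun σ hσ => ?_
    simp only [List.mem_map, List.mem_range, Function.comp_apply] at hσ
    obtain ⟨i, hi, rfl⟩ := hσ
    exact h _ (by omega) (by omega)
  rw [List.range_add, List.map_append, List.prod_append, List.map_map, hones, mul_one]

theorem Finset.image_Icc_one_add_one {β : Type*} [DecidableEq β] (f : ℕ → β) (t : ℕ) :
    (Icc 1 (t + 1)).image f = insert (f 1) ((Icc 1 t).image fun i => f (i + 1)) := by
  rw [← insert_Icc_add_one_left_eq_Icc (by omega), image_insert, ← image_add_right_Icc,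
    image_image]
  rfl

theorem Nat.image_const_sub_Icc {a b c : ℕ} (hac : a ≤ c) (hbc : b ≤ c) :
    (Icc a b).image (c - ·) = Icc (c - b) (c - a) := by
  ext z
  simp only [mem_image, mem_Icc]
  refine ⟨?_, fun hz => ⟨c - z, by omega, by omega⟩⟩
  rintro ⟨w, hw, rfl⟩
  omega

theorem Finset.insert_union_Icc_sdiff {A B : Finset ℕ} {a lo hi : ℕ} (h : lo ≤ hi + 1) :
    insert a (A ∪ (Icc lo hi \ B)) = insert a A ∪ (Icc lo (hi + 1) \ insert (hi + 1) B) := by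
  rw [insert_union, ← insert_Icc_right_eq_Icc_add_one h, insert_sdiff_insert,
    sdiff_insert_of_notMem (by simp)]

theorem Finset.insert_union_Icc_sdiff_of_notMem {A B : Finset ℕ} {lo hi : ℕ} (h : lo ≤ hi + 1)
    (hB : hi + 1 ∉ B) : insert (hi + 1) (A ∪ (Icc lo hi \ B)) = A ∪ (Icc lo (hi + 1) \ B) := by
  rw [← insert_Icc_right_eq_Icc_add_one h, insert_sdiff_of_notMem _ hB, union_insert]

theorem Finset.Icc_sdiff_union_eq {A B : Finset ℕ} {m n p : ℕ} (hp : p ≤ m) (hA : A ⊆ Icc 1 p)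
    (hB : B ⊆ Icc (m + 1) (m + n)) :
    (Icc 1 m \ A) ∪ B =
      (Icc 1 (m + n) \ (Icc (p + 1) m ∪ (A ∪ (Icc (m + 1) (m + n) \ B)))) ∪ Icc (p + 1) m := by
  ext z
  have hzA : z ∈ A → 1 ≤ z ∧ z ≤ p := fun h => mem_Icc.1 (hA h)
  have hzB : z ∈ B → m + 1 ≤ z ∧ z ≤ m + n := fun h => mem_Icc.1 (hB h)
  simp only [mem_union, mem_sdiff, mem_Icc]
  grind

section ReadingWord

variable {m n : ℕ} {col : ℕ × ℕ → Bool}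

/-- The factor of `vAt m n col x y` contributed by row `a ≥ x`. -/
def rowWord (m n : ℕ) (col : ℕ × ℕ → Bool) (a y : ℕ) : Equiv.Perm ℕ :=
  ((List.range n).map fun j =>
    if col (a, m + 1 + j) && decide (m + 1 + j ≤ y) then Equiv.swap (a + j) (a + j + 1)
    else 1).prod

theorem sqPerm_eq_swap (m a j : ℕ) :
    sqPerm m (a, m + 1 + j) = Equiv.swap (a + j) (a + j + 1) := by
  unfold sqPerm
  congr 1 <;> omega

theorem vAt_eq_prod_rowWord {x y : ℕ} (hx : 1 ≤ x) :
    vAt m n col x y = ((List.range (m + 1 - x)).map fun i => rowWord m n col (m - i) y).prod := by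
  unfold vAt readingWord
  rw [List.prod_map_range_eq_of_eq_one _ (show m + 1 - x ≤ m by omega)]
  · refine congrArg List.prod (List.map_congr_left fun i hi => ?_)
    have hxi : x ≤ m - i := by rw [List.mem_range] at hi; omega
    refine congrArg List.prod (List.map_congr_left fun j _ => ?_)
    simp [hxi, sqPerm_eq_swap]
  · intro i hi _
    refine List.prod_eq_one fun σ hσ => ?_
    have hxi : ¬ x ≤ m - i := by omega
    simp only [List.mem_map, List.mem_range] at hσ
    obtain ⟨j, -, rfl⟩ := hσ
    simp [hxi]

theorem vAt_of_lt {x y : ℕ} (h : m < x) : vAt m n col x y = 1 := by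
  rw [vAt_eq_prod_rowWord (by omega), show m + 1 - x = 0 by omega]
  rfl

theorem vAt_eq_vAt_add_one_mul {x y : ℕ} (hx : 1 ≤ x) (hxm : x ≤ m) :
    vAt m n col x y = vAt m n col (x + 1) y * rowWord m n col x y := by
  rw [vAt_eq_prod_rowWord hx, vAt_eq_prod_rowWord (by omega),
    show m + 1 - x = m + 1 - (x + 1) + 1 by omega, List.range_succ, List.map_append,
    List.prod_append]
  simp [show m - (m - x) = x by omega]

theorem assocPerm_eq_vAt : assocPerm m n col = vAt m n col 1 (m + n) := by
  unfold assocPerm vAt readingWord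
  refine congrArg List.prod (List.map_congr_left fun i hi => ?_)
  refine congrArg List.prod (List.map_congr_left fun j hj => ?_)
  rw [List.mem_range] at hi hj
  have h1 : 1 ≤ m - i := by omega
  have h2 : m + 1 + j ≤ m + n := by omega
  simp [h1, h2]

theorem rowWord_mapsTo {a y : ℕ} {s : Set ℕ}
    (h : ∀ j < n, col (a, m + 1 + j) = true → m + 1 + j ≤ y → (a + j ∈ s ↔ a + j + 1 ∈ s)) :
    Set.MapsTo (rowWord m n col a y) s s := by
  refine Equiv.Perm.list_prod_mapsTo fun σ hσ => ?_
  simp only [List.mem_map, List.mem_range] at hσ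
  obtain ⟨j, hj, rfl⟩ := hσ
  split_ifs with hb
  · simp only [Bool.and_eq_true, decide_eq_true_eq] at hb
    exact Equiv.swap_mapsTo (h j hj hb.1 hb.2)
  · exact Set.mapsTo_id s

theorem rowWord_apply_eq_self {a y z : ℕ}
    (h : ∀ j < n, col (a, m + 1 + j) = true → m + 1 + j ≤ y → z ≠ a + j ∧ z ≠ a + j + 1) :
    rowWord m n col a y z = z := by
  refine Set.mem_singleton_iff.1 (Set.mapsTo_singleton.1 (rowWord_mapsTo fun j hj hb hy => ?_))
  have := h j hj hb hy
  simp only [Set.mem_singleton_iff]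
  omega

theorem rowWord_apply_of_lt {a y z : ℕ} (hz : z < a) : rowWord m n col a y z = z := by
  refine rowWord_apply_eq_self fun _ _ _ _ => ?_
  omega

theorem rowWord_apply_of_gt {a y z : ℕ} (hz : a + y - m < z) : rowWord m n col a y z = z := by
  refine rowWord_apply_eq_self fun _ _ _ _ => ?_
  omega

theorem rowWord_add_one {a c : ℕ} (hc : c < n) :
    rowWord m n col a (m + 1 + c) =
      rowWord m n col a (m + c) * if col (a, m + 1 + c) then Equiv.swap (a + c) (a + c + 1) else 1 := by
  unfold rowWord
  rw [List.prod_map_range_eq_of_eq_one _ (show c + 1 ≤ n by omega),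
    List.prod_map_range_eq_of_eq_one _ (show c ≤ n by omega), List.range_succ, List.map_append,
    List.prod_append]
  · congr 1
    · refine congrArg List.prod (List.map_congr_left fun j hj => ?_)
      rw [List.mem_range] at hj
      have h1 : m + 1 + j ≤ m + 1 + c := by omega
      have h2 : m + 1 + j ≤ m + c := by omega
      simp [h1, h2]
    · simp
  · intro j hj _
    have : ¬ m + 1 + j ≤ m + c := by omega
    simp [this]
  · intro j hj _
    have : ¬ m + 1 + j ≤ m + 1 + c := by omega
    simp [this]

theorem rowWord_apply_of_row_black {a c z : ℕ} (hc : c < n)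
    (hrow : ∀ b, m + 1 ≤ b → b ≤ m + 1 + c → col (a, b) = true) (haz : a ≤ z) (hzc : z ≤ a + c) :
    rowWord m n col a (m + 1 + c) z = z + 1 := by
  rw [rowWord_add_one hc, if_pos (hrow _ (by omega) le_rfl), Equiv.Perm.mul_apply]
  rcases eq_or_lt_of_le hzc with rfl | hlt
  · rw [Equiv.swap_apply_left, rowWord_apply_of_gt (by omega)]
  · obtain ⟨c, rfl⟩ : ∃ c', c = c' + 1 := ⟨c - 1, by omega⟩
    rw [Equiv.swap_apply_of_ne_of_ne (by omega) (by omega), show m + (c + 1) = m + 1 + c by omega]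
    exact rowWord_apply_of_row_black (by omega) (fun b hb hbc => hrow b hb (by omega)) haz (by omega)

theorem vAt_apply_of_lt {x y z : ℕ} (hz : z < x) : vAt m n col x y z = z := by
  rcases lt_or_ge m x with h | h
  · rw [vAt_of_lt h]; rfl
  · rw [vAt_eq_vAt_add_one_mul (by omega) h, Equiv.Perm.mul_apply, rowWord_apply_of_lt hz,
      vAt_apply_of_lt (by omega)]
termination_by m + 1 - x

theorem vAt_add_one_apply_of_lt {x c z : ℕ} (hx : 1 ≤ x) (hc : c < n) (hz : z < x + c) :
    vAt m n col x (m + 1 + c) z = vAt m n col x (m + c) z := by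
  rcases lt_or_ge m x with h | h
  · rw [vAt_of_lt h, vAt_of_lt h]
  have hswap : (if col (x, m + 1 + c) then Equiv.swap (x + c) (x + c + 1) else 1) z = z := by
    split_ifs
    · exact Equiv.swap_apply_of_ne_of_ne (by omega) (by omega)
    · rfl
  have hrow : rowWord m n col x (m + c) z ≤ x + c :=
    rowWord_mapsTo (s := Set.Iic (x + c)) (fun j _ _ hj => by simp only [Set.mem_Iic]; omega)
      (show z ≤ x + c by omega)
  rw [vAt_eq_vAt_add_one_mul hx h, vAt_eq_vAt_add_one_mul hx h, Equiv.Perm.mul_apply,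
    Equiv.Perm.mul_apply, rowWord_add_one hc, Equiv.Perm.mul_apply, hswap]
  exact vAt_add_one_apply_of_lt (by omega) hc (by omega)
termination_by m + 1 - x

theorem vAt_apply_of_col_black {x c : ℕ} (hx : 1 ≤ x) (hxm : x ≤ m + 1) (hc : c < n)
    (hcol : ∀ a, x ≤ a → a ≤ m → col (a, m + 1 + c) = true) :
    vAt m n col x (m + 1 + c) (x + c) = m + 1 + c := by
  rcases eq_or_lt_of_le hxm with rfl | h
  · rw [vAt_of_lt (by omega)]; rfl
  rw [vAt_eq_vAt_add_one_mul hx (by omega), Equiv.Perm.mul_apply, rowWord_add_one hc,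
    Equiv.Perm.mul_apply, if_pos (hcol x le_rfl (by omega)), Equiv.swap_apply_left,
    rowWord_apply_of_gt (by omega), show x + c + 1 = x + 1 + c by omega]
  exact vAt_apply_of_col_black (by omega) (by omega) hc fun a ha => hcol a (by omega)
termination_by m + 1 - x

end ReadingWord

section Images

variable {m n : ℕ} {col : ℕ × ℕ → Bool} {x c : ℕ}

theorem image_Icc_vAt_of_row_black (hx : 1 ≤ x) (hxm : x ≤ m) (hc : c < n)
    (hrow : ∀ b, m + 1 ≤ b → b ≤ m + 1 + c → col (x, b) = true) :
    (Icc x (x + c)).image (vAt m n col x (m + 1 + c)) =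
      (Icc (x + 1) (x + 1 + c)).image (vAt m n col (x + 1) (m + 1 + c)) := by
  have hshift : (Icc x (x + c)).image (rowWord m n col x (m + 1 + c)) =
      Icc (x + 1) (x + 1 + c) := by
    rw [image_congr (g := (· + 1)) fun z hz => by
        rw [coe_Icc, Set.mem_Icc] at hz
        exact rowWord_apply_of_row_black hc hrow hz.1 hz.2,
      image_add_right_Icc, Nat.add_right_comm]
  rw [vAt_eq_vAt_add_one_mul hx hxm, Equiv.Perm.coe_mul, ← image_image, hshift]

theorem image_Icc_vAt_of_white (hx : 1 ≤ x) (hxm : x ≤ m) (hc : c < n)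
    (hw : col (x, m + 1 + c) = false) :
    (Icc x (x + c)).image (vAt m n col x (m + 1 + c)) =
      insert x ((Icc (x + 1) (x + c)).image (vAt m n col (x + 1) (m + c))) := by
  have hrow : (Icc x (x + c)).image (rowWord m n col x (m + 1 + c)) = Icc x (x + c) := by
    refine image_perm_eq_self (rowWord_mapsTo fun j _ hb hj => ?_)
    have hjc : j ≠ c := by rintro rfl; rw [hb] at hw; cases hw
    simp only [coe_Icc, Set.mem_Icc]
    omega
  rw [vAt_eq_vAt_add_one_mul hx hxm, Equiv.Perm.coe_mul, ← image_image, hrow,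
    ← insert_Icc_add_one_left_eq_Icc (by omega), image_insert, vAt_apply_of_lt (by omega)]
  congr 1
  refine image_congr fun z hz => ?_
  rw [coe_Icc, Set.mem_Icc] at hz
  exact vAt_add_one_apply_of_lt (by omega) hc (by omega)

theorem image_Icc_vAt_of_col_black (hx : 1 ≤ x) (hxm : x ≤ m) (hc : c < n)
    (hcol : ∀ a, x ≤ a → a ≤ m → col (a, m + 1 + c) = true) :
    (Icc x (x + c)).image (vAt m n col x (m + 1 + c)) =
      insert (m + 1 + c) ((Icc x (x + c - 1)).image (vAt m n col x (m + c))) := by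
  rw [show x + c = x + c - 1 + 1 by omega, ← insert_Icc_right_eq_Icc_add_one (by omega),
    image_insert, show x + c - 1 + 1 = x + c by omega,
    vAt_apply_of_col_black hx (by omega) hc hcol]
  congr 1
  refine image_congr fun z hz => ?_
  rw [coe_Icc, Set.mem_Icc] at hz
  exact vAt_add_one_apply_of_lt hx hc (by omega)

theorem image_Icc_vAt_of_white_of_edge (hx : 1 ≤ x) (hxm : x ≤ m) (hc : c < n)
    (hw : col (x, m + 1 + c) = false) (hedge : m ≤ x ∨ c = 0) :
    (Icc x (x + c)).image (vAt m n col x (m + 1 + c)) = insert x (Icc (m + 1) (m + c)) := by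
  rw [image_Icc_vAt_of_white hx hxm hc hw]
  rcases hedge with hxm' | rfl
  · obtain rfl : x = m := le_antisymm hxm hxm'
    rw [vAt_of_lt (by omega), Equiv.Perm.coe_one, image_id]
  · simp

end Images

namespace IsChainRootedAt

variable {m n : ℕ} {col : ℕ × ℕ → Bool} {x y t : ℕ} {X Y : ℕ → ℕ}

theorem le_X_and_Y_le (h : IsChainRootedAt m n col x y t X Y) {i : ℕ} (hi : 1 ≤ i)
    (hit : i ≤ t) : x ≤ X i ∧ Y i ≤ y := by
  obtain ⟨-, hwhite, hblack, -, hstep, -⟩ := h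
  induction i, hi using Nat.le_induction with
  | base =>
    cases hxy : col (x, y)
    · obtain ⟨-, hX, hY⟩ := hwhite hxy
      omega
    · exact (hblack hxy hit).imp_right And.left
  | succ i hi ih =>
    have := hstep i hi (by omega)
    have := ih (by omega)
    omega

theorem eq_zero (h : IsChainRootedAt m n col x y t X Y)
    (hno : ∀ a b, InGrid m n (a, b) → col (a, b) = false → x ≤ a → b ≤ y → False) : t = 0 := by
  by_contra ht
  obtain ⟨hgrid, hw⟩ := h.1 1 le_rfl (by omega)
  obtain ⟨hX, hY⟩ := h.le_X_and_Y_le le_rfl (by omega)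
  exact hno _ _ hgrid hw hX hY

theorem eq_one (h : IsChainRootedAt m n col x y t X Y) (hw : col (x, y) = false)
    (hno : ∀ a b, InGrid m n (a, b) → col (a, b) = false → x < a → b < y → False) : t = 1 := by
  obtain ⟨ht, hX, hY⟩ := h.2.1 hw
  by_contra ht1
  obtain ⟨hX2, hY2, -⟩ := h.2.2.2.2.1 1 le_rfl (by omega)
  obtain ⟨hgrid, hw2⟩ := h.1 (1 + 1) (by omega) (by omega)
  exact hno _ _ hgrid hw2 (by omega) (by omega)

theorem eq_zero_of_row_black (h : IsChainRootedAt m n col x y t X Y) (hxm : m ≤ x)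
    (hrow : ∀ b, m + 1 ≤ b → b ≤ y → col (x, b) = true) : t = 0 :=
  h.eq_zero fun a b hab hw hxa hby => by
    have ha : a ≤ m := hab.2.1
    rw [show a = x by omega, hrow b hab.2.2.1 hby] at hw
    cases hw

theorem eq_zero_of_col_black (h : IsChainRootedAt m n col x y t X Y) (hy : y ≤ m + 1)
    (hcol : ∀ a, x ≤ a → a ≤ m → col (a, y) = true) : t = 0 :=
  h.eq_zero fun a b hab hw hxa hby => by
    have hb : m + 1 ≤ b := hab.2.2.1
    rw [show b = y by omega, hcol a hxa hab.2.1] at hw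
    cases hw

theorem eq_one_of_white (h : IsChainRootedAt m n col x y t X Y) (hw : col (x, y) = false)
    (hedge : m ≤ x ∨ y ≤ m + 1) : t = 1 :=
  h.eq_one hw fun a b hab _ hxa hby => by
    have : a ≤ m := hab.2.1
    have : m + 1 ≤ b := hab.2.2.1
    omega

theorem notMem_image_Y (h : IsChainRootedAt m n col x y t X Y) {z : ℕ} (hz : y < z) :
    z ∉ (Icc 1 t).image Y := by
  simp only [mem_image, mem_Icc, not_exists, not_and]
  intro i hi hYi
  have := (h.le_X_and_Y_le hi.1 hi.2).2
  omega

theorem reroot {x' y' : ℕ} (h : IsChainRootedAt m n col x y t X Y) (hb : col (x, y) = true)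
    (hx : x ≤ x') (hy : y' ≤ y) (hgrid : InGrid m n (x', y'))
    (hwhite : ∀ a b, InGrid m n (a, b) → col (a, b) = false → x ≤ a → b ≤ y → x' ≤ a ∧ b ≤ y') :
    IsChainRootedAt m n col x' y' t X Y := by
  obtain ⟨hmem, -, hfirst, hempty, hstep, hstop⟩ := h
  refine ⟨hmem, fun hw' => ?_, fun _ ht => ?_, fun ht a b hab hw hxa hby => ?_, hstep, hstop⟩
  · have ht : 1 ≤ t := by
      by_contra ht
      exact hempty (by omega) x' y' hgrid hw' hx hy
    obtain ⟨hX, hY, hmin⟩ := hfirst hb ht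
    obtain ⟨hX1, hY1⟩ := hmin x' y' hgrid hw' hx hy
    obtain ⟨hX1', hY1'⟩ := hwhite _ _ (hmem 1 le_rfl ht).1 (hmem 1 le_rfl ht).2 hX hY
    exact ⟨ht, by omega, by omega⟩
  · obtain ⟨hX, hY, hmin⟩ := hfirst hb ht
    obtain ⟨hX1, hY1⟩ := hwhite _ _ (hmem 1 le_rfl ht).1 (hmem 1 le_rfl ht).2 hX hY
    exact ⟨hX1, hY1, fun a b hab hw hxa hby => hmin a b hab hw (by omega) (by omega)⟩
  · exact hempty ht a b hab hw (by omega) (by omega)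

theorem tail (h : IsChainRootedAt m n col x (y + 1) (t + 1) X Y) (hw : col (x, y + 1) = false)
    (hgrid : InGrid m n (x + 1, y)) :
    IsChainRootedAt m n col (x + 1) y t (fun i => X (i + 1)) (fun i => Y (i + 1)) := by
  obtain ⟨hmem, hwhite, -, -, hstep, hstop⟩ := h
  obtain ⟨-, hX, hY⟩ := hwhite hw
  refine ⟨fun i hi hit => hmem (i + 1) (by omega) (by omega), fun hw' => ?_, fun _ ht => ?_,
    fun ht a b hab hw' hxa hby => ?_, fun i hi hit => hstep (i + 1) (by omega) (by omega),
    fun ht => hstop (by omega)⟩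
  · dsimp only
    have ht : 1 ≤ t := by
      by_contra ht
      obtain rfl : t = 0 := by omega
      exact hstop le_rfl _ _ hgrid hw' (by rw [zero_add]; omega) (by rw [zero_add]; omega)
    obtain ⟨hX2, hY2, hmin⟩ := hstep 1 le_rfl (by omega)
    have := hmin _ _ hgrid hw' (by omega) (by omega)
    exact ⟨ht, by omega, by omega⟩
  · dsimp only
    obtain ⟨hX2, hY2, hmin⟩ := hstep 1 le_rfl (by omega)
    exact ⟨by omega, by omega, fun a b hab hw' hxa hby => hmin a b hab hw' (by omega) (by omega)⟩
  · obtain rfl := ht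
    exact hstop le_rfl a b hab hw' (by rw [zero_add]; omega) (by rw [zero_add]; omega)

theorem of_row_black (h : IsChainRootedAt m n col x y t X Y) (hxm : x < m) (hy : m + 1 ≤ y)
    (hyn : y ≤ m + n) (hrow : ∀ b, m + 1 ≤ b → b ≤ y → col (x, b) = true) :
    IsChainRootedAt m n col (x + 1) y t X Y := by
  refine h.reroot (hrow y hy le_rfl) (by omega) le_rfl ⟨by omega, hxm, hy, hyn⟩
    fun a b hab hw hxa hby => ⟨Nat.succ_le_of_lt (lt_of_le_of_ne hxa ?_), hby⟩
  rintro rfl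
  rw [hrow b hab.2.2.1 hby] at hw
  cases hw

theorem of_col_black (h : IsChainRootedAt m n col x (y + 1) t X Y) (hx : 1 ≤ x) (hxm : x ≤ m)
    (hy : m + 1 ≤ y) (hyn : y < m + n) (hcol : ∀ a, x ≤ a → a ≤ m → col (a, y + 1) = true) :
    IsChainRootedAt m n col x y t X Y := by
  refine h.reroot (hcol x le_rfl hxm) le_rfl (by omega) ⟨hx, hxm, hy, hyn.le⟩
    fun a b hab hw hxa hby => ⟨hxa, Nat.le_of_lt_succ (lt_of_le_of_ne hby ?_)⟩
  rintro rfl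
  rw [hcol a hxa hab.2.1] at hw
  cases hw

end IsChainRootedAt

theorem IsCauchon.row_or_col {m n : ℕ} {col : ℕ × ℕ → Bool} (hC : IsCauchon m n col) {x y : ℕ}
    (hgrid : InGrid m n (x, y)) (hb : col (x, y) = true) :
    (∀ b, m + 1 ≤ b → b ≤ y → col (x, b) = true) ∨ (∀ a, x ≤ a → a ≤ m → col (a, y) = true) := by
  refine (hC x y hgrid hb).imp (fun hrow b hb' hby => ?_) (fun hcol a hxa ham => ?_)
  · rcases eq_or_lt_of_le hby with rfl | hlt
    exacts [hb, hrow b hb' hlt]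
  · rcases eq_or_lt_of_le hxa with rfl | hlt
    exacts [hb, hcol a hlt ham]

theorem image_Icc_vAt_eq_chain {m n : ℕ} {col : ℕ × ℕ → Bool} (hC : IsCauchon m n col)
    {x c t : ℕ} {X Y : ℕ → ℕ} (hx : 1 ≤ x) (hxm : x ≤ m) (hc : c < n)
    (h : IsChainRootedAt m n col x (m + 1 + c) t X Y) :
    (Icc x (x + c)).image (vAt m n col x (m + 1 + c)) =
      (Icc 1 t).image X ∪ (Icc (m + 1) (m + 1 + c) \ (Icc 1 t).image Y) := by
  cases hxy : col (x, m + 1 + c) with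
  | false =>
    obtain ⟨ht, hX, hY⟩ := h.2.1 hxy
    by_cases hrec : x < m ∧ 0 < c
    · obtain ⟨c, rfl⟩ : ∃ c', c = c' + 1 := ⟨c - 1, by omega⟩
      obtain ⟨t, rfl⟩ : ∃ t', t = t' + 1 := ⟨t - 1, by omega⟩
      have htail := h.tail (y := m + 1 + c) hxy ⟨by omega, by omega, by omega, by omega⟩
      rw [image_Icc_vAt_of_white hx hxm hc hxy, show x + (c + 1) = x + 1 + c by omega,
        show m + (c + 1) = m + 1 + c by omega,
        image_Icc_vAt_eq_chain hC (by omega) (by omega) (by omega) htail,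
        image_Icc_one_add_one X, image_Icc_one_add_one Y, hX, hY,
        show m + 1 + (c + 1) = m + 1 + c + 1 by omega, insert_union_Icc_sdiff (by omega)]
    · rw [image_Icc_vAt_of_white_of_edge hx hxm hc hxy (by omega),
        h.eq_one_of_white hxy (by omega)]
      ext z
      simp only [mem_insert, mem_Icc, mem_union, mem_sdiff, Icc_self, image_singleton,
        mem_singleton, hX, hY]
      omega
  | true =>
    rcases hC.row_or_col ⟨hx, hxm, by omega, by omega⟩ hxy with hrow | hcol
    · rw [image_Icc_vAt_of_row_black hx hxm hc hrow]
      rcases lt_or_eq_of_le hxm with hlt | rfl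
      · exact image_Icc_vAt_eq_chain hC (by omega) hlt hc
          (h.of_row_black hlt (by omega) (by omega) hrow)
      · rw [vAt_of_lt (by omega), h.eq_zero_of_row_black le_rfl hrow]
        simp
    · rw [image_Icc_vAt_of_col_black hx hxm hc hcol]
      cases c with
      | zero =>
        rw [h.eq_zero_of_col_black le_rfl hcol]
        simp [Icc_eq_empty_of_lt (show x - 1 < x by omega)]
      | succ c =>
        have h' := h.of_col_black (y := m + 1 + c) hx hxm (by omega) (by omega) hcol
        rw [show x + (c + 1) - 1 = x + c by omega, show m + (c + 1) = m + 1 + c by omega,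
          image_Icc_vAt_eq_chain hC hx hxm (by omega) h',
          show m + 1 + (c + 1) = m + 1 + c + 1 by omega,
          insert_union_Icc_sdiff_of_notMem (by omega) (h'.notMem_image_Y (by omega))]
termination_by m - x + c

theorem image_Icc_vAt_eq_of_le {m n : ℕ} {col : ℕ × ℕ → Bool} {u x y k : ℕ} (hu : 1 ≤ u)
    (hux : u ≤ x) (hxm : x ≤ m + 1) (hk : x + n ≤ k + 1) :
    (Icc 1 k).image (vAt m n col u y) = (Icc 1 k).image (vAt m n col x y) := by
  rcases eq_or_lt_of_le hux with rfl | hlt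
  · rfl
  have hrow : (Icc 1 k).image (rowWord m n col u y) = Icc 1 k := by
    refine image_perm_eq_self (rowWord_mapsTo fun j hj _ _ => ?_)
    simp only [coe_Icc, Set.mem_Icc]
    omega
  rw [vAt_eq_vAt_add_one_mul hu (by omega), Equiv.Perm.coe_mul, ← image_image, hrow]
  exact image_Icc_vAt_eq_of_le (by omega) hlt hxm hk
termination_by x - u

theorem image_Icc_assocPerm_eq_chain {m n : ℕ} {col : ℕ × ℕ → Bool} (hC : IsCauchon m n col)
    {x k t : ℕ} {X Y : ℕ → ℕ} (hx : 1 ≤ x) (hxm : x ≤ m) (hn : 1 ≤ n) (hk : x + n = k + 1)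
    (h : IsChainRootedAt m n col x (m + n) t X Y) :
    (Icc 1 k).image (assocPerm m n col) =
      Icc 1 (x - 1) ∪ ((Icc 1 t).image X ∪ (Icc (m + 1) (m + n) \ (Icc 1 t).image Y)) := by
  have hsplit : Icc 1 k = Icc 1 (x - 1) ∪ Icc x (x + (n - 1)) := by
    ext z
    simp only [mem_union, mem_Icc]
    omega
  have hlow : (Icc 1 (x - 1)).image (vAt m n col x (m + n)) = Icc 1 (x - 1) := by
    conv_rhs => rw [← image_id (s := Icc 1 (x - 1))]
    exact image_congr fun z hz => vAt_apply_of_lt (by simp at hz; omega)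
  have hchain := image_Icc_vAt_eq_chain hC hx hxm (c := n - 1) (by omega)
    (by rwa [show m + 1 + (n - 1) = m + n by omega])
  rw [show m + 1 + (n - 1) = m + n by omega] at hchain
  rw [assocPerm_eq_vAt, image_Icc_vAt_eq_of_le le_rfl hx (by omega) hk.le, hsplit, image_union,
    hlow, hchain]

theorem image_Icc_comp_assocPerm_eq_chain {m n : ℕ} {col : ℕ × ℕ → Bool}
    (hC : IsCauchon m n col) {ω : Equiv.Perm ℕ} (hω1 : ∀ i, 1 ≤ i → i ≤ m → ω i = m + 1 - i)
    (hω2 : ∀ i, m + 1 ≤ i → i ≤ m + n → ω i = 2 * m + n + 1 - i)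
    {x k t : ℕ} {X Y : ℕ → ℕ} (hx : 1 ≤ x) (hxm : x ≤ m) (hn : 1 ≤ n) (hk : x + n = k + 1)
    (h : IsChainRootedAt m n col x (m + n) t X Y) :
    (Icc 1 k).image (fun j => ω (assocPerm m n col j)) =
      Icc (m + 2 - x) m ∪ ((Icc 1 t).image (fun i => m + 1 - X i) ∪
        (Icc (m + 1) (m + n) \ (Icc 1 t).image (fun i => 2 * m + n + 1 - Y i))) := by
  have hlow : (Icc 1 (x - 1)).image ω = Icc (m + 2 - x) m := by
    rw [image_congr fun i hi => hω1 i (by simp at hi; omega) (by simp at hi; omega),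
      Nat.image_const_sub_Icc (by omega) (by omega)]
    congr 1
    omega
  have hhigh : (Icc (m + 1) (m + n)).image ω = Icc (m + 1) (m + n) := by
    rw [image_congr fun i hi => hω2 i (by simp at hi; omega) (by simp at hi; omega),
      Nat.image_const_sub_Icc (by omega) (by omega)]
    congr 1 <;> omega
  have hX : Set.EqOn (ω ∘ X) (fun i => m + 1 - X i) (Icc 1 t) := fun i hi => by
    rw [coe_Icc, Set.mem_Icc] at hi
    obtain ⟨⟨-, hXm, -, -⟩, -⟩ := h.1 i hi.1 hi.2
    exact hω1 (X i) (by have := (h.le_X_and_Y_le hi.1 hi.2).1; omega) hXm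
  have hY : Set.EqOn (ω ∘ Y) (fun i => 2 * m + n + 1 - Y i) (Icc 1 t) := fun i hi => by
    rw [coe_Icc, Set.mem_Icc] at hi
    obtain ⟨⟨-, -, hY1, hYn⟩, -⟩ := h.1 i hi.1 hi.2
    exact hω2 (Y i) hY1 hYn
  rw [← Function.comp_def ω, ← image_image, image_Icc_assocPerm_eq_chain hC hx hxm hn hk h,
    image_union, image_union, image_sdiff _ _ ω.injective, image_image, image_image, hlow, hhigh,
    image_congr hX, image_congr hY]

theorem grassmannNecklace_term_high_general
    (m n : ℕ) (hn : 2 ≤ n)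
    (ω : Equiv.Perm ℕ)
    (hω1 : ∀ i, 1 ≤ i → i ≤ m → ω i = m + 1 - i)
    (hω2 : ∀ i, m + 1 ≤ i → i ≤ m + n → ω i = 2 * m + n + 1 - i)
    (col : ℕ × ℕ → Bool) (hC : IsCauchon m n col)
    (k : ℕ) (hk1 : n + 1 ≤ k) (hkn : k ≤ m + n - 1)
    (t : ℕ) (X Y : ℕ → ℕ)
    (hchain : IsChainRootedAt m n col (boxSE m n k).1 (boxSE m n k).2 t X Y) :
    (Finset.Icc 1 m \ Finset.image (fun i => m + 1 - X i) (Finset.Icc 1 t)) ∪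
        Finset.image (fun i => 2 * m + n + 1 - Y i) (Finset.Icc 1 t) =
      (Finset.Icc 1 (m + n) \
        Finset.image (fun j => ω (assocPerm m n col j)) (Finset.Icc 1 k)) ∪
        Finset.Icc (m + n - k + 1) m := by
  have hbox : boxSE m n k = (k - n + 1, m + n) := if_neg (by omega)
  rw [hbox] at hchain
  rw [image_Icc_comp_assocPerm_eq_chain hC hω1 hω2 (by omega) (by omega) (by omega) (by omega)
    hchain, show m + 2 - (k - n + 1) = m + n - k + 1 by omega]
  refine Finset.Icc_sdiff_union_eq (show m + n - k ≤ m by omega) (fun z hz => ?_) fun z hz => ?_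
  all_goals
    obtain ⟨i, hi, rfl⟩ := mem_image.1 hz
    rw [mem_Icc] at hi ⊢
    obtain ⟨⟨-, hXm, hY1, hYn⟩, -⟩ := hchain.1 i hi.1 hi.2
  · have := (hchain.le_X_and_Y_le hi.1 hi.2).1
    omega
  · omega

/-- Let `ω ∈ S_{m+n}` map `i ↦ m+1-i` on `{1,...,m}` and `i ↦ 2m+n+1-i` on `{m+1,...,m+n}`.
Let `col` be an `m × n` Cauchon diagram with associated permutation `v`, let
`k ∈ {n+1,...,m+n-1}`, and let `(X 1, Y 1),...,(X t, Y t)` be the chain rooted at box `k` on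
the south-east border.  Then `({1,...,m} \ {m+1-X i}) ∪ {2m+n+1-Y i} =
({1,...,m+n} \ (ω ∘ v)({1,...,k})) ∪ {m+n-k+1,...,m}`. -/
theorem grassmannNecklace_term_high
    (m n : ℕ) (hm : 2 ≤ m) (hn : 2 ≤ n)
    (ω : Equiv.Perm ℕ)
    (hω1 : ∀ i, 1 ≤ i → i ≤ m → ω i = m + 1 - i)
    (hω2 : ∀ i, m + 1 ≤ i → i ≤ m + n → ω i = 2 * m + n + 1 - i)
    (hω3 : ∀ i, i = 0 ∨ m + n < i → ω i = i)
    (col : ℕ × ℕ → Bool) (hC : IsCauchon m n col)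
    (k : ℕ) (hk1 : n + 1 ≤ k) (hkn : k ≤ m + n - 1)
    (t : ℕ) (X Y : ℕ → ℕ)
    (hchain : IsChainRootedAt m n col (boxSE m n k).1 (boxSE m n k).2 t X Y) :
    (Finset.Icc 1 m \ Finset.image (fun i => m + 1 - X i) (Finset.Icc 1 t)) ∪
        Finset.image (fun i => 2 * m + n + 1 - Y i) (Finset.Icc 1 t) =
      (Finset.Icc 1 (m + n) \
        Finset.image (fun j => ω (assocPerm m n col j)) (Finset.Icc 1 k)) ∪
        Finset.Icc (m + n - k + 1) m :=
  grassmannNecklace_term_high_general m n hn ω hω1 hω2 col hC k hk1 hkn t X Y hchain
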